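/- arXiv:0901.0870 — 2 statements merged into one kernel-verified Lean document; each statement's English description precedes it below -/
import Mathlib

section
/- Let R be a noncommutative Poisson ring and let (q_i)_{i∈I}, (p_i)_{i∈I} be finite families of elements of R such that Σ_{i∈I} {q_i, p_i} = 1. Then for all A, B ∈ R one has [A,B] = (Σ_{i∈I} [q_i, p_i]) · {A,B}. -/
/-- A noncommutative Poisson ring structure on a unital associative ring `R`:
a bracket that is additive in each argument, alternating, satisfies the
Jacobi identity and the Leibniz rule with respect to the ring product. -/
structure NCPoissonStructure (R : Type*) [Ring R] where
  bracket : R → R → R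
  add_left : ∀ a b c : R, bracket (a + b) c = bracket a c + bracket b c
  add_right : ∀ a b c : R, bracket a (b + c) = bracket a b + bracket a c
  alternating : ∀ a : R, bracket a a = 0
  jacobi : ∀ a b c : R,
    bracket a (bracket b c) + bracket b (bracket c a) + bracket c (bracket a b) = 0
  leibniz : ∀ a b c : R, bracket a (b * c) = bracket a b * c + b * bracket a c

theorem NCP.antisymm {R : Type*} [Ring R] (P : NCPoissonStructure R) (a b : R) :
    P.bracket a b = - P.bracket b a := by
  have h := P.alternating (a + b)
  rw [P.add_left, P.add_right, P.add_right, P.alternating, P.alternating] at h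
  have h' : P.bracket a b + P.bracket b a = 0 := by simpa using h
  exact eq_neg_of_add_eq_zero_left h'

theorem NCP.leibniz_left {R : Type*} [Ring R] (P : NCPoissonStructure R) (a b c : R) :
    P.bracket (a * b) c = P.bracket a c * b + a * P.bracket b c := by
  rw [NCP.antisymm P (a*b) c, P.leibniz, NCP.antisymm P c a, NCP.antisymm P c b]
  noncomm_ring

theorem NCP.key {R : Type*} [Ring R] (P : NCPoissonStructure R) (a b c d : R) :
    (a * c - c * a) * P.bracket b d = P.bracket a c * (b * d - d * b) := by
  have h1 : P.bracket (a * b) (c * d)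
      = P.bracket a c * b * d + a * P.bracket b c * d
        + c * (P.bracket a d * b) + c * (a * P.bracket b d) := by
    rw [P.leibniz, NCP.leibniz_left, NCP.leibniz_left]
    noncomm_ring
  have h2 : P.bracket (a * b) (c * d)
      = P.bracket a c * d * b + c * P.bracket a d * b
        + a * (P.bracket b c * d) + a * (c * P.bracket b d) := by
    rw [NCP.leibniz_left, P.leibniz, P.leibniz]
    noncomm_ring
  have h3 := h1.symm.trans h2
  rw [mul_sub, sub_mul]
  linear_combination (norm := noncomm_ring) -h3

/-- If `∑ i, {q i, p i} = 1`, then `[A,B] = (∑ i, [q i, p i]) · {A,B}` for all `A, B`. -/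
theorem commutator_eq_Z_mul_bracket
    {R : Type*} [Ring R] (P : NCPoissonStructure R)
    {I : Type*} [Fintype I] (q p : I → R)
    (h : ∑ i, P.bracket (q i) (p i) = 1) (A B : R) :
    A * B - B * A = (∑ i, (q i * p i - p i * q i)) * P.bracket A B := by
  rw [Finset.sum_mul]
  have : ∀ i : I, (q i * p i - p i * q i) * P.bracket A B
      = P.bracket (q i) (p i) * (A * B - B * A) := fun i => NCP.key P (q i) A (p i) B
  simp_rw [this, ← Finset.sum_mul, h, one_mul]
end

section
/- Let R be a noncommutative Poisson ring containing elements x_1, …, x_n, p_1, …, p_n (n ≥ 1) satisfying the canonical relations {x_i, p_j} = δ_{ij}·1, {x_i, x_j} = 0, {p_i, p_j} = 0 for all i, j. Then: (a) all the commutators [x_i, p_i] coincide, i.e. [x_i, p_i] = [x_j, p_j] for all i, j; (b) the common element Z := [x_1, p_1] satisfies [A,B] = Z·{A,B} for all A, B ∈ R; (c) Z is central with respect to both products ({Z,A} = 0 and Z·A = A·Z for all A ∈ R); (d) any two elements of R with vanishing bracket commute; in particular x_i·x_j = x_j·x_i, p_i·p_j = p_j·p_i, and x_i·p_j = p_j·x_i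 for i ≠ j. -/
/-!
Expanding `{ab, cd}` by the Leibniz rule in two orders gives the Farkas–Letzter identity
`{a,c}·[b,d] = [a,c]·{b,d}`. With `{X,Q} = 1` it reads `[A,B] = Z·{A,B}` for `Z = [X,Q]`,
which yields the commutators `[x i, p i] = Z` and the commutativity of elements with
vanishing bracket. Since `{A,·}` is a derivation of the product (Leibniz) and of the
bracket (Jacobi), `{A,Z} = [{A,X},Q] + [X,{A,Q}] = Z·({{A,X},Q} + {X,{A,Q}})`
`= Z·{A,{X,Q}} = 0`; finally `[Z,A] = Z·{Z,A} = 0`.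
-/

namespace NCPoissonStructure

variable {R : Type*} [Ring R] (P : NCPoissonStructure R)

lemma antisymm (a b : R) : P.bracket b a = -P.bracket a b := by
  have h := P.alternating (a + b)
  rw [P.add_left, P.add_right, P.add_right, P.alternating, P.alternating,
    zero_add, add_zero] at h
  exact eq_neg_of_add_eq_zero_right h

lemma zero_right (a : R) : P.bracket a 0 = 0 := by
  simpa using (P.add_right a 0 0).symm

lemma neg_right (a b : R) : P.bracket a (-b) = -P.bracket a b := by
  have h := P.add_right a b (-b)
  rw [add_neg_cancel, P.zero_right] at h
  exact eq_neg_of_add_eq_zero_right h.symm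

lemma sub_right (a b c : R) : P.bracket a (b - c) = P.bracket a b - P.bracket a c := by
  rw [sub_eq_add_neg, P.add_right, P.neg_right, ← sub_eq_add_neg]

lemma one_right (a : R) : P.bracket a 1 = 0 := by
  have h := P.leibniz a 1 1
  simp only [one_mul, mul_one] at h
  exact left_eq_add.mp h

lemma leibniz_left (a b c : R) :
    P.bracket (a * b) c = P.bracket a c * b + a * P.bracket b c := by
  rw [P.antisymm, P.leibniz, P.antisymm c a, P.antisymm c b]
  noncomm_ring

lemma leibniz_bracket (a b c : R) :
    P.bracket c (P.bracket a b) = P.bracket (P.bracket c a) b + P.bracket a (P.bracket c b) := by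
  have h := P.jacobi c a b
  rw [P.antisymm c b, P.neg_right, P.antisymm (P.bracket c a) b] at h
  linear_combination (norm := abel) h

lemma leibniz_commutator (a b c : R) :
    P.bracket c (a * b - b * a)
      = (P.bracket c a * b - b * P.bracket c a) + (a * P.bracket c b - P.bracket c b * a) := by
  rw [P.sub_right, P.leibniz, P.leibniz]
  noncomm_ring

lemma bracket_mul_commutator_eq_commutator_mul_bracket (a b c d : R) :
    P.bracket a c * (b * d - d * b) = (a * c - c * a) * P.bracket b d := by
  have h₁ : P.bracket (a * b) (c * d)
      = P.bracket a c * d * b + c * (P.bracket a d * b) + a * (P.bracket b c * d)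
        + a * (c * P.bracket b d) := by
    rw [P.leibniz_left, P.leibniz, P.leibniz]
    noncomm_ring
  have h₂ : P.bracket (a * b) (c * d)
      = P.bracket a c * b * d + a * P.bracket b c * d
        + c * (P.bracket a d * b + a * P.bracket b d) := by
    rw [P.leibniz, P.leibniz_left, P.leibniz_left]
    noncomm_ring
  linear_combination (norm := noncomm_ring) h₂.symm.trans h₁

section CanonicalPair

variable {P} {X Q : R}

lemma commutator_eq_mul_bracket (hXQ : P.bracket X Q = 1) (A B : R) :
    A * B - B * A = (X * Q - Q * X) * P.bracket A B := by
  simpa only [hXQ, one_mul] using P.bracket_mul_commutator_eq_commutator_mul_bracket X A Q B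

lemma bracket_commutator_left_eq_zero (hXQ : P.bracket X Q = 1) (A : R) :
    P.bracket (X * Q - Q * X) A = 0 := by
  rw [P.antisymm, neg_eq_zero]
  calc P.bracket A (X * Q - Q * X)
      = (P.bracket A X * Q - Q * P.bracket A X) + (X * P.bracket A Q - P.bracket A Q * X) :=
        P.leibniz_commutator X Q A
    _ = (X * Q - Q * X) * P.bracket A (P.bracket X Q) := by
        rw [commutator_eq_mul_bracket hXQ (P.bracket A X) Q,
          commutator_eq_mul_bracket hXQ X (P.bracket A Q), P.leibniz_bracket X Q A, mul_add]
    _ = 0 := by rw [hXQ, P.one_right, mul_zero]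

lemma commutator_mul_comm (hXQ : P.bracket X Q = 1) (A : R) :
    (X * Q - Q * X) * A = A * (X * Q - Q * X) := by
  rw [← sub_eq_zero, commutator_eq_mul_bracket hXQ, bracket_commutator_left_eq_zero hXQ,
    mul_zero]

lemma mul_comm_of_bracket_eq_zero (hXQ : P.bracket X Q = 1) {A B : R} (h : P.bracket A B = 0) :
    A * B = B * A := by
  rw [← sub_eq_zero, commutator_eq_mul_bracket hXQ, h, mul_zero]

end CanonicalPair

end NCPoissonStructure

open NCPoissonStructure in
theorem canonical_variables_Z_general
    {R : Type*} [Ring R] (P : NCPoissonStructure R) {n : ℕ} (hn : 1 ≤ n)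
    (x p : Fin n → R)
    (hxp : ∀ i j, P.bracket (x i) (p j) = if i = j then 1 else 0) :
    (∀ i j, x i * p i - p i * x i = x j * p j - p j * x j) ∧
    (∀ A B : R, A * B - B * A
        = (x ⟨0, hn⟩ * p ⟨0, hn⟩ - p ⟨0, hn⟩ * x ⟨0, hn⟩) * P.bracket A B) ∧
    (∀ A : R,
        P.bracket (x ⟨0, hn⟩ * p ⟨0, hn⟩ - p ⟨0, hn⟩ * x ⟨0, hn⟩) A = 0 ∧
        (x ⟨0, hn⟩ * p ⟨0, hn⟩ - p ⟨0, hn⟩ * x ⟨0, hn⟩) * A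
          = A * (x ⟨0, hn⟩ * p ⟨0, hn⟩ - p ⟨0, hn⟩ * x ⟨0, hn⟩)) ∧
    (∀ A B : R, P.bracket A B = 0 → A * B = B * A) := by
  have hxp_diag (i : Fin n) : P.bracket (x i) (p i) = 1 := by rw [hxp, if_pos rfl]
  have hZ := hxp_diag ⟨0, hn⟩
  have hcomm (i : Fin n) :
      x i * p i - p i * x i = x ⟨0, hn⟩ * p ⟨0, hn⟩ - p ⟨0, hn⟩ * x ⟨0, hn⟩ := by
    rw [commutator_eq_mul_bracket hZ, hxp_diag, mul_one]
  exact ⟨fun i j => (hcomm i).trans (hcomm j).symm, commutator_eq_mul_bracket hZ,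
    fun A => ⟨bracket_commutator_left_eq_zero hZ A, commutator_mul_comm hZ A⟩,
    fun _ _ => mul_comm_of_bracket_eq_zero hZ⟩

/-- For canonical variables `x i`, `p i` (`1 ≤ n`) with `{x i, p j} = δ_{ij}`,
`{x i, x j} = 0 = {p i, p j}`: (a) all the commutators `[x i, p i]` coincide;
(b) the common element `Z := [x 0, p 0]` satisfies `[A,B] = Z·{A,B}` for all `A, B`;
(c) `Z` is central for both products; (d) elements with vanishing bracket commute. -/
theorem canonical_variables_Z
    {R : Type*} [Ring R] (P : NCPoissonStructure R) {n : ℕ} (hn : 1 ≤ n)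
    (x p : Fin n → R)
    (hxp : ∀ i j, P.bracket (x i) (p j) = if i = j then 1 else 0)
    (hxx : ∀ i j, P.bracket (x i) (x j) = 0)
    (hpp : ∀ i j, P.bracket (p i) (p j) = 0) :
    (∀ i j, x i * p i - p i * x i = x j * p j - p j * x j) ∧
    (∀ A B : R, A * B - B * A
        = (x ⟨0, hn⟩ * p ⟨0, hn⟩ - p ⟨0, hn⟩ * x ⟨0, hn⟩) * P.bracket A B) ∧
    (∀ A : R,
        P.bracket (x ⟨0, hn⟩ * p ⟨0, hn⟩ - p ⟨0, hn⟩ * x ⟨0, hn⟩) A = 0 ∧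
        (x ⟨0, hn⟩ * p ⟨0, hn⟩ - p ⟨0, hn⟩ * x ⟨0, hn⟩) * A
          = A * (x ⟨0, hn⟩ * p ⟨0, hn⟩ - p ⟨0, hn⟩ * x ⟨0, hn⟩)) ∧
    (∀ A B : R, P.bracket A B = 0 → A * B = B * A) :=
  canonical_variables_Z_general P hn x p hxp
end
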